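/- (Theorem 1, Stable GAP Safe sphere.) Let A, Ã ∈ ℝ^{N×K}, y ∈ ℝ^N, λ > 0, r ∈ [1, ∞], and let E ≥ ‖A − Ã‖_{r→2}, where ‖M‖_{r→2} = sup_{‖u‖_r ≤ 1}‖Mu‖₂. Let x* ∈ ℝ^K minimize the Lasso primal objective P(x|A) over ℝ^K, and set θ* = (y − Ax*)/λ. Then for every x ∈ ℝ^K and every θ ∈ Δ_A = {θ ∈ ℝ^N : ‖Aᵀθ‖_∞ ≤ 1}, one has ‖θ* − θ‖₂ ≤ (1/λ)·√(2 G(x, θ|Ã) + 2 δ(x)), where G(x, θ|Ã) = P(x|Ã) − D(θ) and δ(x) = ‖y − Ãx‖₂ · E‖x‖_r + ½ E²‖x‖_r². -/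
import Mathlib


open scoped ENNReal
open Matrix

/-- The ℓp-norm on ℝ^N for `p ∈ [1, ∞]` (given as `p : ℝ≥0∞`). -/
noncomputable def lpNorm {N : ℕ} (p : ℝ≥0∞) (v : Fin N → ℝ) : ℝ :=
  if p = ∞ then ⨆ i, |v i| else (∑ i, |v i| ^ p.toReal) ^ (1 / p.toReal)

/-- The Lasso primal objective `P(x|A) = ½‖Ax − y‖₂² + λ‖x‖₁`. -/
noncomputable def lassoPrimal {N K : ℕ} (A : Matrix (Fin N) (Fin K) ℝ)
    (y : Fin N → ℝ) (lam : ℝ) (x : Fin K → ℝ) : ℝ :=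
  (1 / 2) * (lpNorm 2 (A *ᵥ x - y)) ^ 2 + lam * lpNorm 1 x

/-- The Lasso dual objective `D(θ) = ½‖y‖₂² − (λ²/2)‖θ − y/λ‖₂²`. -/
noncomputable def lassoDual {N : ℕ} (y : Fin N → ℝ) (lam : ℝ)
    (θ : Fin N → ℝ) : ℝ :=
  (1 / 2) * (lpNorm 2 y) ^ 2 - (lam ^ 2 / 2) * (lpNorm 2 (θ - lam⁻¹ • y)) ^ 2

lemma lp2_eq {N : ℕ} (v : Fin N → ℝ) :
    lpNorm 2 v = Real.sqrt (∑ i, v i ^ 2) := by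
  rw [lpNorm, if_neg (by norm_num : (2:ℝ≥0∞) ≠ ∞)]
  have h2 : (2:ℝ≥0∞).toReal = 2 := by norm_num
  rw [h2, Real.sqrt_eq_rpow]
  congr 1
  refine Finset.sum_congr rfl fun i _ => ?_
  rw [show ((2:ℝ)) = ((2:ℕ):ℝ) by norm_num, Real.rpow_natCast, sq_abs]

lemma lp1_eq {N : ℕ} (v : Fin N → ℝ) :
    lpNorm 1 v = ∑ i, |v i| := by
  rw [lpNorm, if_neg (by norm_num : (1:ℝ≥0∞) ≠ ∞)]
  simp [Real.rpow_one]

lemma lp2_nonneg {N : ℕ} (v : Fin N → ℝ) : 0 ≤ lpNorm 2 v := by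
  rw [lp2_eq]; exact Real.sqrt_nonneg _

lemma lp2_sq {N : ℕ} (v : Fin N → ℝ) : (lpNorm 2 v) ^ 2 = ∑ i, v i ^ 2 := by
  rw [lp2_eq, Real.sq_sqrt (Finset.sum_nonneg fun i _ => sq_nonneg _)]

lemma lpNorm_nonneg {N : ℕ} (r : ℝ≥0∞) (v : Fin N → ℝ) : 0 ≤ lpNorm r v := by
  rw [lpNorm]; split
  · exact Real.iSup_nonneg fun i => abs_nonneg _
  · positivity

lemma abs_le_lpNorm {K : ℕ} {r : ℝ≥0∞} (hr : 1 ≤ r) (u : Fin K → ℝ) (i : Fin K) :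
    |u i| ≤ lpNorm r u := by
  rw [lpNorm]
  by_cases h : r = ∞
  · rw [if_pos h]
    exact le_ciSup (f := fun j => |u j|) (Set.Finite.bddAbove (Set.finite_range _)) i
  · rw [if_neg h]
    have hp : 1 ≤ r.toReal := by
      rw [← ENNReal.toReal_one]; exact ENNReal.toReal_mono h hr
    have hp0 : r.toReal ≠ 0 := by linarith
    have h1 : |u i| ^ r.toReal ≤ ∑ j, |u j| ^ r.toReal :=
      Finset.single_le_sum (f := fun j => |u j| ^ r.toReal)
        (fun j _ => Real.rpow_nonneg (abs_nonneg _) _) (Finset.mem_univ i)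
    calc |u i| = (|u i| ^ r.toReal) ^ (1 / r.toReal) := by
          rw [← Real.rpow_mul (abs_nonneg _), mul_one_div, div_self hp0, Real.rpow_one]
      _ ≤ _ := Real.rpow_le_rpow (Real.rpow_nonneg (abs_nonneg _) _) h1 (by positivity)

lemma lpNorm_smul {K : ℕ} {r : ℝ≥0∞} (hr : 1 ≤ r) {c : ℝ} (hc : 0 ≤ c) (u : Fin K → ℝ) :
    lpNorm r (c • u) = c * lpNorm r u := by
  rw [lpNorm, lpNorm]
  by_cases h : r = ∞
  · rw [if_pos h, if_pos h]
    have : ∀ i, |(c • u) i| = |u i| * c := fun i => by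
      simp [abs_mul, abs_of_nonneg hc, mul_comm]
    simp only [this]
    rw [← Real.iSup_mul_of_nonneg hc, mul_comm]
  · rw [if_neg h, if_neg h]
    have hp : 1 ≤ r.toReal := by
      rw [← ENNReal.toReal_one]; exact ENNReal.toReal_mono h hr
    have hp0 : r.toReal ≠ 0 := by linarith
    have : ∀ i, |(c • u) i| ^ r.toReal = c ^ r.toReal * |u i| ^ r.toReal := fun i => by
      simp only [Pi.smul_apply, smul_eq_mul, abs_mul, abs_of_nonneg hc]
      rw [Real.mul_rpow hc (abs_nonneg _)]
    simp only [this]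
    rw [← Finset.mul_sum, Real.mul_rpow (Real.rpow_nonneg hc _)
      (Finset.sum_nonneg fun i _ => Real.rpow_nonneg (abs_nonneg _) _),
      ← Real.rpow_mul hc, mul_one_div, div_self hp0, Real.rpow_one]

lemma opnorm_bound {N K : ℕ} {B : Matrix (Fin N) (Fin K) ℝ} {r : ℝ≥0∞} (hr : 1 ≤ r)
    {E : ℝ} (hE : sSup {t : ℝ | ∃ u : Fin K → ℝ, lpNorm r u ≤ 1 ∧ t = lpNorm 2 (B *ᵥ u)} ≤ E) :
    0 ≤ E ∧ ∀ x : Fin K → ℝ, lpNorm 2 (B *ᵥ x) ≤ E * lpNorm r x := by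
  set S := {t : ℝ | ∃ u : Fin K → ℝ, lpNorm r u ≤ 1 ∧ t = lpNorm 2 (B *ᵥ u)} with hS
  have hbdd : BddAbove S := by
    refine ⟨Real.sqrt (∑ i, (∑ j, |B i j|) ^ 2), ?_⟩
    rintro t ⟨u, hu, rfl⟩
    rw [lp2_eq]
    apply Real.sqrt_le_sqrt
    refine Finset.sum_le_sum fun i _ => ?_
    have h1 : |(B *ᵥ u) i| ≤ ∑ j, |B i j| := by
      show |∑ j, B i j * u j| ≤ _
      refine (Finset.abs_sum_le_sum_abs _ _).trans (Finset.sum_le_sum fun j _ => ?_)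
      rw [abs_mul]
      have h2 : |u j| ≤ 1 := (abs_le_lpNorm hr u j).trans hu
      nlinarith [abs_nonneg (B i j)]
    calc (B *ᵥ u) i ^ 2 = |(B *ᵥ u) i| ^ 2 := (sq_abs _).symm
      _ ≤ (∑ j, |B i j|) ^ 2 := by
          exact pow_le_pow_left₀ (abs_nonneg _) h1 2
  have hmemE : ∀ t ∈ S, t ≤ E := fun t ht => (le_csSup hbdd ht).trans hE
  have hzero : (0:ℝ) ∈ S := by
    refine ⟨0, ?_, ?_⟩
    · rw [show ((0 : Fin K → ℝ)) = ((0:ℝ) • (0 : Fin K → ℝ)) by simp,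
        lpNorm_smul hr le_rfl]; norm_num
    · rw [Matrix.mulVec_zero, lp2_eq]; simp
  have hE0 : 0 ≤ E := hmemE 0 hzero
  refine ⟨hE0, fun x => ?_⟩
  by_cases hx : lpNorm r x = 0
  · have hx0 : x = 0 := by
      funext i
      have h3 := abs_le_lpNorm hr x i
      rw [hx] at h3
      simpa using abs_eq_zero.mp (le_antisymm h3 (abs_nonneg _))
    have h20 : lpNorm 2 (0 : Fin N → ℝ) = 0 := by rw [lp2_eq]; simp
    rw [hx0, Matrix.mulVec_zero, h20]
    exact mul_nonneg hE0 (lpNorm_nonneg _ _)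
  · have hpos : 0 < lpNorm r x := (lpNorm_nonneg r x).lt_of_ne (Ne.symm hx)
    set c := (lpNorm r x)⁻¹ with hc
    have hc0 : 0 ≤ c := inv_nonneg.2 hpos.le
    have hmem : lpNorm 2 (B *ᵥ (c • x)) ∈ S := by
      refine ⟨c • x, ?_, rfl⟩
      rw [lpNorm_smul hr hc0, hc, inv_mul_cancel₀ hx]
    have hle := hmemE _ hmem
    rw [Matrix.mulVec_smul, show c • (B *ᵥ x) = c • (B *ᵥ x) from rfl] at hle
    have : lpNorm 2 (c • (B *ᵥ x)) = c * lpNorm 2 (B *ᵥ x) :=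
      lpNorm_smul (by norm_num) hc0 _
    rw [this] at hle
    have := mul_le_mul_of_nonneg_left hle hpos.le
    rwa [← mul_assoc, mul_inv_cancel₀ hx, one_mul, mul_comm (lpNorm r x) E] at this


/-- Stable GAP Safe sphere: if `E ≥ ‖A − Ã‖_{r→2}`, then for every `x` and
every dual feasible `θ ∈ Δ_A`, the dual optimal point `θ* = (y − Ax*)/λ`
satisfies `‖θ* − θ‖₂ ≤ (1/λ)√(2 G(x, θ|Ã) + 2 δ(x))` with
`G(x, θ|Ã) = P(x|Ã) − D(θ)` and `δ(x) = ‖y − Ãx‖₂ E‖x‖_r + ½E²‖x‖_r²`. -/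
theorem stable_gap_safe_sphere (N K : ℕ)
    (A Atil : Matrix (Fin N) (Fin K) ℝ) (y : Fin N → ℝ) (lam : ℝ)
    (hlam : 0 < lam) (r : ℝ≥0∞) (hr : 1 ≤ r) (E : ℝ)
    (hE : sSup {t : ℝ | ∃ u : Fin K → ℝ, lpNorm r u ≤ 1 ∧
        t = lpNorm 2 ((A - Atil) *ᵥ u)} ≤ E)
    (xstar : Fin K → ℝ)
    (hmin : ∀ x : Fin K → ℝ, lassoPrimal A y lam xstar ≤ lassoPrimal A y lam x)
    (x : Fin K → ℝ) (θ : Fin N → ℝ) (hθ : lpNorm ∞ (Aᵀ *ᵥ θ) ≤ 1) :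
    lpNorm 2 (lam⁻¹ • (y - A *ᵥ xstar) - θ)
      ≤ (1 / lam) * Real.sqrt (2 * (lassoPrimal Atil y lam x - lassoDual y lam θ)
          + 2 * (lpNorm 2 (y - Atil *ᵥ x) * (E * lpNorm r x)
              + (1 / 2) * E ^ 2 * (lpNorm r x) ^ 2)) := by
  obtain ⟨hE0, hopb⟩ := opnorm_bound hr hE
  have hlam' : lam ≠ 0 := ne_of_gt hlam
  have hnx : 0 ≤ lpNorm r x := lpNorm_nonneg r x
  have hn : 0 ≤ lpNorm 2 (y - Atil *ᵥ x) := lp2_nonneg _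
  have hnb : 0 ≤ lpNorm 2 ((A - Atil) *ᵥ x) := lp2_nonneg _
  have hbm : lpNorm 2 ((A - Atil) *ᵥ x) ≤ E * lpNorm r x := hopb x
  -- feasibility of θ
  have hswap : ∑ i, (A *ᵥ xstar) i * θ i = ∑ j, (Aᵀ *ᵥ θ) j * xstar j := by
    simp only [Matrix.mulVec, dotProduct, Matrix.transpose_apply, Finset.sum_mul]
    rw [Finset.sum_comm]
    exact Finset.sum_congr rfl fun j _ => Finset.sum_congr rfl fun i _ => by ring
  have f1 : ∑ i, (A *ᵥ xstar) i * θ i ≤ ∑ j, |xstar j| := by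
    rw [hswap]
    refine Finset.sum_le_sum fun j _ => ?_
    have hinf : |(Aᵀ *ᵥ θ) j| ≤ 1 := (abs_le_lpNorm le_top _ j).trans hθ
    calc (Aᵀ *ᵥ θ) j * xstar j ≤ |(Aᵀ *ᵥ θ) j * xstar j| := le_abs_self _
      _ = |(Aᵀ *ᵥ θ) j| * |xstar j| := abs_mul _ _
      _ ≤ 1 * |xstar j| := mul_le_mul_of_nonneg_right hinf (abs_nonneg _)
      _ = |xstar j| := one_mul _
  -- optimality of xstar
  have f2 := hmin x
  simp only [lassoPrimal] at f2
  rw [lp2_sq, lp2_sq, lp1_eq, lp1_eq] at f2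
  simp only [Pi.sub_apply] at f2
  have f2' : ∑ i, ((A *ᵥ xstar) i - y i) ^ 2 = ∑ i, (y i - (A *ᵥ xstar) i) ^ 2 :=
    Finset.sum_congr rfl fun i _ => by ring
  rw [f2'] at f2
  -- decomposition A x = Atil x + (A - Atil) x
  have hab : ∀ i, (A *ᵥ x) i = (Atil *ᵥ x) i + ((A - Atil) *ᵥ x) i := fun i => by
    rw [Matrix.sub_mulVec]; simp
  have f3 : ∑ i, ((A *ᵥ x) i - y i) ^ 2
      = ∑ i, ((Atil *ᵥ x) i - y i) ^ 2
        + 2 * ∑ i, ((Atil *ᵥ x) i - y i) * ((A - Atil) *ᵥ x) i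
        + ∑ i, ((A - Atil) *ᵥ x) i ^ 2 := by
    rw [Finset.mul_sum, ← Finset.sum_add_distrib, ← Finset.sum_add_distrib]
    refine Finset.sum_congr rfl fun i _ => ?_
    rw [hab i]; ring
  rw [f3] at f2
  -- Cauchy-Schwarz
  have f4 : ∑ i, ((Atil *ᵥ x) i - y i) * ((A - Atil) *ᵥ x) i
      ≤ lpNorm 2 (y - Atil *ᵥ x) * lpNorm 2 ((A - Atil) *ᵥ x) := by
    have hcs := Real.sum_mul_le_sqrt_mul_sqrt Finset.univ
        (fun i => (Atil *ᵥ x) i - y i) (fun i => ((A - Atil) *ᵥ x) i)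
    rw [lp2_eq, lp2_eq]
    refine hcs.trans (le_of_eq ?_)
    congr 2
    exact Finset.sum_congr rfl fun i _ => by rw [Pi.sub_apply]; ring
  have f6 : ∑ i, ((A - Atil) *ᵥ x) i ^ 2 = (lpNorm 2 ((A - Atil) *ᵥ x)) ^ 2 := (lp2_sq _).symm
  -- expansion of the LHS
  have hpt : ∀ s t : ℝ, lam ^ 2 * (lam⁻¹ * s - t) ^ 2 = (s - lam * t) ^ 2 := by
    intro s t; field_simp
  have f8 : lam ^ 2 * ∑ i, (lam⁻¹ • (y - A *ᵥ xstar) - θ) i ^ 2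
      = ∑ i, (y i - (A *ᵥ xstar) i) ^ 2 - 2 * lam * ∑ i, y i * θ i
        + 2 * lam * ∑ i, (A *ᵥ xstar) i * θ i + lam ^ 2 * ∑ i, θ i ^ 2 := by
    calc lam ^ 2 * ∑ i, (lam⁻¹ • (y - A *ᵥ xstar) - θ) i ^ 2
        = ∑ i, (y i - (A *ᵥ xstar) i - lam * θ i) ^ 2 := by
          rw [Finset.mul_sum]
          refine Finset.sum_congr rfl fun i _ => ?_
          simp only [Pi.sub_apply, Pi.smul_apply, smul_eq_mul]
          exact hpt _ _
      _ = _ := by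
          rw [Finset.mul_sum, Finset.mul_sum, Finset.mul_sum,
            ← Finset.sum_sub_distrib, ← Finset.sum_add_distrib, ← Finset.sum_add_distrib]
          exact Finset.sum_congr rfl fun i _ => by ring
  -- dual objective expansion
  have f9 : lassoDual y lam θ = lam * ∑ i, y i * θ i - lam ^ 2 / 2 * ∑ i, θ i ^ 2 := by
    simp only [lassoDual]
    rw [lp2_sq, lp2_sq]
    have h1 : lam ^ 2 / 2 * ∑ i, (θ - lam⁻¹ • y) i ^ 2
        = lam ^ 2 / 2 * ∑ i, θ i ^ 2 - lam * ∑ i, y i * θ i + 1 / 2 * ∑ i, y i ^ 2 := by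
      rw [Finset.mul_sum, Finset.mul_sum, Finset.mul_sum, Finset.mul_sum,
        ← Finset.sum_sub_distrib, ← Finset.sum_add_distrib]
      refine Finset.sum_congr rfl fun i _ => ?_
      simp only [Pi.sub_apply, Pi.smul_apply, smul_eq_mul]
      field_simp
      ring
    rw [h1]; ring
  -- primal objective expansion at x with Atil
  have f10 : lassoPrimal Atil y lam x
      = 1 / 2 * ∑ i, ((Atil *ᵥ x) i - y i) ^ 2 + lam * ∑ j, |x j| := by
    simp only [lassoPrimal]
    rw [lp2_sq, lp1_eq]
    simp only [Pi.sub_apply]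
  -- key squared inequality
  have hkey : lam ^ 2 * ∑ i, (lam⁻¹ • (y - A *ᵥ xstar) - θ) i ^ 2
      ≤ 2 * (lassoPrimal Atil y lam x - lassoDual y lam θ)
        + 2 * (lpNorm 2 (y - Atil *ᵥ x) * (E * lpNorm r x)
            + (1 / 2) * E ^ 2 * (lpNorm r x) ^ 2) := by
    rw [f8, f9, f10]
    have h_a : ∑ i, ((Atil *ᵥ x) i - y i) * ((A - Atil) *ᵥ x) i
        ≤ lpNorm 2 (y - Atil *ᵥ x) * (E * lpNorm r x) :=
      f4.trans (mul_le_mul_of_nonneg_left hbm hn)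
    have h_b : (lpNorm 2 ((A - Atil) *ᵥ x)) ^ 2 ≤ (E * lpNorm r x) ^ 2 :=
      pow_le_pow_left₀ hnb hbm 2
    have h_b' : ∑ i, ((A - Atil) *ᵥ x) i ^ 2 ≤ (E * lpNorm r x) ^ 2 := by
      rw [f6]; exact h_b
    have h_c : 2 * lam * ∑ i, (A *ᵥ xstar) i * θ i ≤ 2 * lam * ∑ j, |xstar j| :=
      mul_le_mul_of_nonneg_left f1 (by positivity)
    have h_m : (E * lpNorm r x) ^ 2 = E ^ 2 * (lpNorm r x) ^ 2 := by ring
    linarith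
  -- conclude
  have h1 := Real.sqrt_le_sqrt hkey
  rw [Real.sqrt_mul (sq_nonneg lam) _, Real.sqrt_sq hlam.le] at h1
  rw [lp2_eq, one_div, inv_mul_eq_div, le_div_iff₀ hlam]
  linarith
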